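/- arXiv:2405.06052 — 10 statements merged into one kernel-verified Lean document; each statement's English description precedes it below -/
import Mathlib

section
/- Let B be a Boolean algebra and let (a, g) and (a', g') be contracts over B. Then the pair (a ∨ a', g ∧ g') is a contract over B, and it is the greatest lower bound of (a, g) and (a', g') with respect to the refinement order: a contract (a'', g'') satisfies (a'', g'') ≤ (a, g) and (a'', g'') ≤ (a', g') if and only if (a'', g'') ≤ (a ∨ a', g ∧ g'). -/
/-- The refinement order on contracts: `(a, g) ≤ (a', g')` iff `g ≤ g'` and `a' ≤ a`. -/
def ContractLE {B : Type*} [BooleanAlgebra B] (c c' : B × B) : Prop :=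
  c.2 ≤ c'.2 ∧ c'.1 ≤ c.1

/-- `(a ⊔ a', g ⊓ g')` is a contract and is the greatest lower bound of the contracts
`(a, g)` and `(a', g')` in the refinement order. -/
theorem contract_conjunction_is_glb {B : Type*} [BooleanAlgebra B] (a g a' g' : B)
    (h : a ⊔ g = ⊤) (h' : a' ⊔ g' = ⊤) :
    (a ⊔ a') ⊔ (g ⊓ g') = ⊤ ∧
    ∀ a'' g'' : B, a'' ⊔ g'' = ⊤ →
      ((ContractLE (a'', g'') (a, g) ∧ ContractLE (a'', g'') (a', g')) ↔
        ContractLE (a'', g'') (a ⊔ a', g ⊓ g')) := by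
  constructor
  · rw [sup_inf_left]
    rw [eq_top_iff] at h h' ⊢
    exact le_inf (h.trans (by gcongr <;> simp)) (h'.trans (by gcongr <;> simp))
  · intro a'' g'' _
    unfold ContractLE
    simp only [Prod.fst, Prod.snd]
    constructor
    · rintro ⟨⟨h1, h2⟩, ⟨h3, h4⟩⟩
      exact ⟨le_inf h1 h3, sup_le h2 h4⟩
    · rintro ⟨h1, h2⟩
      exact ⟨⟨h1.trans inf_le_left, le_sup_left.trans h2⟩,
             ⟨h1.trans inf_le_right, le_sup_right.trans h2⟩⟩
end

section
/- Let B be a Boolean algebra and let (a, g) and (a', g') be contracts over B. Then the pair (a ∧ a', g ∨ g') is a contract over B, and it is the least upper bound of (a, g) and (a', g') with respect to the refinement order: a contract (a'', g'') satisfies (a, g) ≤ (a'', g'') and (a', g') ≤ (a'', g'') if and only if (a ∧ a', g ∨ g') ≤ (a'', g''). -/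
/-- `(a ⊓ a', g ⊔ g')` is a contract and is the least upper bound of the contracts
`(a, g)` and `(a', g')` in the refinement order. -/
theorem contract_disjunction_is_lub {B : Type*} [BooleanAlgebra B] (a g a' g' : B)
    (h : a ⊔ g = ⊤) (h' : a' ⊔ g' = ⊤) :
    (a ⊓ a') ⊔ (g ⊔ g') = ⊤ ∧
    ∀ a'' g'' : B, a'' ⊔ g'' = ⊤ →
      ((ContractLE (a, g) (a'', g'') ∧ ContractLE (a', g') (a'', g'')) ↔
        ContractLE (a ⊓ a', g ⊔ g') (a'', g'')) := by
  constructor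
  · rw [sup_inf_right]
    have h1 : a ⊔ (g ⊔ g') = ⊤ := top_unique (h ▸ sup_le le_sup_left (le_sup_left.trans le_sup_right))
    have h2 : a' ⊔ (g ⊔ g') = ⊤ := top_unique (h' ▸ sup_le le_sup_left (le_sup_right.trans le_sup_right))
    rw [h1, h2, top_inf_eq]
  · intro a'' g'' _
    constructor
    · rintro ⟨⟨hg1, ha1⟩, ⟨hg2, ha2⟩⟩
      exact ⟨sup_le hg1 hg2, le_inf ha1 ha2⟩
    · rintro ⟨hg, ha⟩
      exact ⟨⟨le_sup_left.trans hg, ha.trans inf_le_left⟩,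
             ⟨le_sup_right.trans hg, ha.trans inf_le_right⟩⟩
end

section
/- Let B be a Boolean algebra, let x, y ∈ B, and let (a, g) be a contract over B. Then the left and right actions commute: (x · (a, g)) · y = x · ((a, g) · y), where x · (a, g) = (x ∧ a, x ⇨ g) and (a, g) · y = (a, a ⇨ (y ∧ g)). -/
/-- The left action `x · (a, g) = (x ⊓ a, x ⇨ g)`. -/
def leftAct {B : Type*} [BooleanAlgebra B] (x : B) (c : B × B) : B × B :=
  (x ⊓ c.1, x ⇨ c.2)

/-- The right action `(a, g) · x = (a, a ⇨ (x ⊓ g))`. -/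
def rightAct {B : Type*} [BooleanAlgebra B] (c : B × B) (x : B) : B × B :=
  (c.1, c.1 ⇨ (x ⊓ c.2))

/-- The left and right actions commute: `(x · (a, g)) · y = x · ((a, g) · y)`. -/
theorem leftAct_rightAct_comm {B : Type*} [BooleanAlgebra B] (x y a g : B)
    (h : a ⊔ g = ⊤) :
    rightAct (leftAct x (a, g)) y = leftAct x (rightAct (a, g) y) := by
  have absorb : y ⊓ xᶜ ⊔ xᶜ = xᶜ := sup_eq_right.mpr inf_le_right
  have key : (x ⊓ a) ⇨ (y ⊓ (x ⇨ g)) = x ⇨ (a ⇨ (y ⊓ g)) := by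
    rw [himp_eq, himp_eq, himp_eq, himp_eq, compl_inf, inf_sup_left,
      sup_assoc, sup_assoc, ← sup_assoc (y ⊓ xᶜ), absorb, sup_comm xᶜ aᶜ, ← sup_assoc]
  simp only [leftAct, rightAct, key]
end

section
/- Let B be a Boolean algebra, let x, y ∈ B, and let (a, g) and (a', g') be contracts over B. Then the two-sided action distributes over the conjunction of contracts: x · ((a, g) ∧ (a', g')) · y = (x · (a, g) · y) ∧ (x · (a', g') · y), where the conjunction of contracts is (a, g) ∧ (a', g') = (a ∨ a', g ∧ g'), the left action is x · (a, g) = (x ∧ a, x ⇨ g), and the right action is (a, g) · y = (a, a ⇨ (y ∧ g)). -/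
/-- The conjunction of contracts `(a, g) ∧ (a', g') = (a ⊔ a', g ⊓ g')`. -/
def conj {B : Type*} [BooleanAlgebra B] (c c' : B × B) : B × B :=
  (c.1 ⊔ c'.1, c.2 ⊓ c'.2)

/-- The two-sided action distributes over conjunction of contracts:
`x · ((a, g) ∧ (a', g')) · y = (x · (a, g) · y) ∧ (x · (a', g') · y)`. -/
theorem act_distrib_conj {B : Type*} [BooleanAlgebra B] (x y a g a' g' : B)
    (h : a ⊔ g = ⊤) (h' : a' ⊔ g' = ⊤) :
    rightAct (leftAct x (conj (a, g) (a', g'))) y =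
      conj (rightAct (leftAct x (a, g)) y) (rightAct (leftAct x (a', g')) y) := by
  have hg : aᶜ ≤ g := by
    calc aᶜ = aᶜ ⊓ (a ⊔ g) := by rw [h, inf_top_eq]
    _ ≤ g := by simp [inf_sup_left]
  have hg' : a'ᶜ ≤ g' := by
    calc a'ᶜ = a'ᶜ ⊓ (a' ⊔ g') := by rw [h', inf_top_eq]
    _ ≤ g' := by simp [inf_sup_left]
  simp only [leftAct, rightAct, conj, Prod.mk.injEq]
  refine ⟨inf_sup_left x a a', le_antisymm (le_inf ?_ ?_) ?_⟩
  · exact himp_le_himp (inf_le_inf_left x le_sup_left)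
      (inf_le_inf_left y (himp_le_himp_left inf_le_left))
  · exact himp_le_himp (inf_le_inf_left x le_sup_right)
      (inf_le_inf_left y (himp_le_himp_left inf_le_right))
  · rw [le_himp_iff, inf_sup_left x a a', inf_sup_left]
    have key : ∀ u v b b' : B, vᶜ ≤ b' →
        (x ⊓ u ⇨ y ⊓ (x ⇨ b)) ⊓ (x ⊓ v ⇨ y ⊓ (x ⇨ b')) ⊓ (x ⊓ u) ≤ y ⊓ (x ⇨ (b ⊓ b')) := by
      intro u v b b' hb'
      have h1 : (x ⊓ u ⇨ y ⊓ (x ⇨ b)) ⊓ (x ⊓ v ⇨ y ⊓ (x ⇨ b')) ⊓ (x ⊓ u) ≤ y ⊓ (x ⇨ b) :=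
        (inf_le_inf_right _ inf_le_left).trans himp_inf_le
      refine le_inf (h1.trans inf_le_left) ?_
      rw [himp_inf_distrib x b b']
      refine le_inf (h1.trans inf_le_right) ?_
      have hsplit : (x ⊓ u ⇨ y ⊓ (x ⇨ b)) ⊓ (x ⊓ v ⇨ y ⊓ (x ⇨ b')) ⊓ (x ⊓ u)
          ≤ ((x ⊓ v ⇨ y ⊓ (x ⇨ b')) ⊓ (x ⊓ v)) ⊔ vᶜ := by
        calc (x ⊓ u ⇨ y ⊓ (x ⇨ b)) ⊓ (x ⊓ v ⇨ y ⊓ (x ⇨ b')) ⊓ (x ⊓ u)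
            ≤ (x ⊓ v ⇨ y ⊓ (x ⇨ b')) ⊓ x := by
              refine le_inf ((inf_le_inf_right _ inf_le_right).trans inf_le_left) ?_
              exact inf_le_right.trans inf_le_left
        _ = ((x ⊓ v ⇨ y ⊓ (x ⇨ b')) ⊓ x) ⊓ (v ⊔ vᶜ) := by rw [sup_compl_eq_top, inf_top_eq]
        _ = ((x ⊓ v ⇨ y ⊓ (x ⇨ b')) ⊓ x ⊓ v) ⊔ ((x ⊓ v ⇨ y ⊓ (x ⇨ b')) ⊓ x ⊓ vᶜ) :=
              inf_sup_left _ _ _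
        _ ≤ ((x ⊓ v ⇨ y ⊓ (x ⇨ b')) ⊓ (x ⊓ v)) ⊔ vᶜ :=
              sup_le_sup (by rw [inf_assoc]) inf_le_right
      refine hsplit.trans (sup_le ?_ (hb'.trans le_himp))
      exact himp_inf_le.trans inf_le_right
    refine sup_le (key a a' g g' hg') ?_
    have := key a' a g' g hg
    rw [inf_comm (x ⊓ a' ⇨ y ⊓ (x ⇨ g')) (x ⊓ a ⇨ y ⊓ (x ⇨ g)), inf_comm g' g] at this
    exact this
end

section
/- Let B be a Boolean algebra and let C, C', C'' be contracts over B. Then merging distributes over conjunction of contracts: (C ∧ C') • C'' = (C • C'') ∧ (C' • C''), where the conjunction of contracts is (a, g) ∧ (a', g') = (a ∨ a', g ∧ g') and the merger is (a, g) • (a', g') = (a ∧ a', (a ∧ a') ⇨ (g ∧ g')). -/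
/-- The merger of contracts `(a, g) • (a', g') = (a ⊓ a', (a ⊓ a') ⇨ (g ⊓ g'))`. -/
def merge {B : Type*} [BooleanAlgebra B] (c c' : B × B) : B × B :=
  (c.1 ⊓ c'.1, (c.1 ⊓ c'.1) ⇨ (c.2 ⊓ c'.2))

lemma himp_inf_le_of_compl_le {B : Type*} [BooleanAlgebra B] (a g a'' g'' : B)
    (hg : aᶜ ≤ g) : ((a ⊓ a'') ⇨ (g ⊓ g'')) ⊓ a'' ≤ g := by
  set Q := (a ⊓ a'') ⇨ (g ⊓ g'') with hQdef
  have hsplit : Q ⊓ a'' = (Q ⊓ a'' ⊓ a) ⊔ (Q ⊓ a'' ⊓ aᶜ) := by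
    rw [← inf_sup_left, sup_compl_eq_top, inf_top_eq]
  rw [hsplit]
  apply sup_le
  · have h1 : Q ⊓ a'' ⊓ a = Q ⊓ (a ⊓ a'') := by
      rw [inf_assoc, inf_comm a'' a]
    rw [h1]
    exact le_trans himp_inf_le inf_le_left
  · exact le_trans inf_le_right hg

lemma merge_distrib_conj_key {B : Type*} [BooleanAlgebra B] (a g a' g' a'' g'' : B)
    (hg : aᶜ ≤ g) (hg' : a'ᶜ ≤ g') :
    ((a ⊔ a') ⊓ a'') ⇨ (g ⊓ g' ⊓ g'') =
      ((a ⊓ a'') ⇨ (g ⊓ g'')) ⊓ ((a' ⊓ a'') ⇨ (g' ⊓ g'')) := by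
  set P := (a ⊓ a'') ⇨ (g ⊓ g'') with hP
  set Q := (a' ⊓ a'') ⇨ (g' ⊓ g'') with hQ
  apply le_antisymm
  · refine le_inf (himp_le_himp ?_ ?_) (himp_le_himp ?_ ?_)
    · exact inf_le_inf_right _ le_sup_left
    · exact inf_le_inf_right _ inf_le_left
    · exact inf_le_inf_right _ le_sup_right
    · exact inf_le_inf_right _ inf_le_right
  · rw [le_himp_iff, inf_sup_right, inf_sup_left]
    have hP2 : P ⊓ a'' ≤ g := himp_inf_le_of_compl_le a g a'' g'' hg
    have hQ2 : Q ⊓ a'' ≤ g' := himp_inf_le_of_compl_le a' g' a'' g'' hg'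
    apply sup_le
    · refine le_inf (le_inf ?_ ?_) ?_
      · calc P ⊓ Q ⊓ (a ⊓ a'') ≤ P ⊓ (a ⊓ a'') :=
              inf_le_inf_right _ inf_le_left
          _ ≤ g ⊓ g'' := himp_inf_le
          _ ≤ g := inf_le_left
      · calc P ⊓ Q ⊓ (a ⊓ a'') ≤ Q ⊓ a'' := inf_le_inf inf_le_right inf_le_right
          _ ≤ g' := hQ2
      · calc P ⊓ Q ⊓ (a ⊓ a'') ≤ P ⊓ (a ⊓ a'') :=
              inf_le_inf_right _ inf_le_left
          _ ≤ g ⊓ g'' := himp_inf_le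
          _ ≤ g'' := inf_le_right
    · refine le_inf (le_inf ?_ ?_) ?_
      · calc P ⊓ Q ⊓ (a' ⊓ a'') ≤ P ⊓ a'' := inf_le_inf inf_le_left inf_le_right
          _ ≤ g := hP2
      · calc P ⊓ Q ⊓ (a' ⊓ a'') ≤ Q ⊓ (a' ⊓ a'') :=
              inf_le_inf_right _ inf_le_right
          _ ≤ g' ⊓ g'' := himp_inf_le
          _ ≤ g' := inf_le_left
      · calc P ⊓ Q ⊓ (a' ⊓ a'') ≤ Q ⊓ (a' ⊓ a'') :=
              inf_le_inf_right _ inf_le_right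
          _ ≤ g' ⊓ g'' := himp_inf_le
          _ ≤ g'' := inf_le_right

/-- Merging distributes over conjunction of contracts:
`(C ∧ C') • C'' = (C • C'') ∧ (C' • C'')`. -/
theorem merge_distrib_conj {B : Type*} [BooleanAlgebra B] (C C' C'' : B × B)
    (h : C.1 ⊔ C.2 = ⊤) (h' : C'.1 ⊔ C'.2 = ⊤) (h'' : C''.1 ⊔ C''.2 = ⊤) :
    merge (conj C C') C'' = conj (merge C C'') (merge C' C'') := by
  obtain ⟨a, g⟩ := C
  obtain ⟨a', g'⟩ := C'
  obtain ⟨a'', g''⟩ := C''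
  simp only [merge, conj] at *
  have hg : aᶜ ≤ g := disjoint_compl_left.le_of_codisjoint (codisjoint_iff.mpr h)
  have hg' : a'ᶜ ≤ g' := disjoint_compl_left.le_of_codisjoint (codisjoint_iff.mpr h')
  exact Prod.ext (inf_sup_right a a' a'')
    (merge_distrib_conj_key a g a' g' a'' g'' hg hg')
end

section
/- Let B be a Boolean algebra, let x, y ∈ B, and let (a, g) and (a', g') be contracts over B. Then x · ((a, g) • (a', g')) · y = (x · (a, g) · y) • (a', g'), i.e., acting on a merger of contracts is the same as acting on one of the factors. Explicitly, (x ∧ a ∧ a', (x ∧ a ∧ a') ⇨ (y ∧ g ∧ g')) = (x ∧ a, (x ∧ a) ⇨ (y ∧ g)) • (a', g'). -/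
lemma himp_congr' {B : Type*} [GeneralizedHeytingAlgebra B] (u : B) {v w : B}
    (h : u ⊓ v = u ⊓ w) : u ⇨ v = u ⇨ w := by
  rw [show u ⇨ v = u ⇨ (u ⊓ v) by rw [himp_inf_distrib, himp_self, top_inf_eq], h,
      himp_inf_distrib, himp_self, top_inf_eq]

lemma inf_himp_of_le {B : Type*} [GeneralizedHeytingAlgebra B] {u c : B} (t : B)
    (h : u ≤ c) : u ⊓ (c ⇨ t) = u ⊓ t := by
  apply le_antisymm
  · exact le_inf inf_le_left ((inf_le_inf_right _ h).trans (by rw [inf_himp]; exact inf_le_right))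
  · exact inf_le_inf_left _ (le_himp_iff.mpr inf_le_left)

theorem second_comp {B : Type*} [BooleanAlgebra B] (x y a g a' g' : B) :
    (x ⊓ (a ⊓ a')) ⇨ (y ⊓ (x ⇨ (a ⊓ a') ⇨ (g ⊓ g'))) =
      ((x ⊓ a) ⊓ a') ⇨ (((x ⊓ a) ⇨ (y ⊓ (x ⇨ g))) ⊓ g') := by
  rw [himp_himp, ← inf_assoc]
  apply himp_congr'
  set u := x ⊓ a ⊓ a' with hu
  have hx : u ≤ x := inf_le_left.trans inf_le_left
  have hxa : u ≤ x ⊓ a := inf_le_left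
  have hx2 : u ≤ x ⊓ (a ⊓ a') := by rw [hu, inf_assoc]
  rw [show u ⊓ (y ⊓ (u ⇨ g ⊓ g')) = (u ⊓ y) ⊓ (u ⊓ (u ⇨ g ⊓ g')) by
        rw [inf_inf_distrib_left],
      inf_himp_of_le _ le_rfl,
      show u ⊓ ((x ⊓ a ⇨ y ⊓ (x ⇨ g)) ⊓ g') = (u ⊓ (x ⊓ a ⇨ y ⊓ (x ⇨ g))) ⊓ (u ⊓ g') by
        rw [inf_inf_distrib_left],
      inf_himp_of_le _ hxa,
      show u ⊓ (y ⊓ (x ⇨ g)) = (u ⊓ y) ⊓ (u ⊓ (x ⇨ g)) by rw [inf_inf_distrib_left],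
      inf_himp_of_le _ hx]
  rw [inf_inf_distrib_left u g g']
  ac_rfl


/-- Acting on a merger of contracts is the same as acting on one of the factors:
`x · ((a, g) • (a', g')) · y = (x · (a, g) · y) • (a', g')`. -/
theorem act_merge {B : Type*} [BooleanAlgebra B] (x y a g a' g' : B)
    (h : a ⊔ g = ⊤) (h' : a' ⊔ g' = ⊤) :
    rightAct (leftAct x (merge (a, g) (a', g'))) y =
      merge (rightAct (leftAct x (a, g)) y) (a', g') := by
  unfold leftAct rightAct merge
  simp only [Prod.mk.injEq]
  constructor
  · ac_rfl
  · exact second_comp x y a g a' g'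
end

section
/- Let B be a Boolean algebra, let e = (⊤, ⊤) be the contract with trivial assumptions and guarantees, and let (a, g) and (a', g') be contracts over B. Then a · (e • (a', g')) · g = (a, g) • (a', g'), and in particular a · e · g = (a, g), where · denotes the left and right actions of B on contracts and • denotes merging. -/
/-- With `e = (⊤, ⊤)`: `a · (e • (a', g')) · g = (a, g) • (a', g')`, and in particular
`a · e · g = (a, g)`. -/
theorem act_unit_merge {B : Type*} [BooleanAlgebra B] (a g a' g' : B)
    (h : a ⊔ g = ⊤) (h' : a' ⊔ g' = ⊤) :
    rightAct (leftAct a (merge ((⊤ : B), (⊤ : B)) (a', g'))) g = merge (a, g) (a', g') ∧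
    rightAct (leftAct a ((⊤ : B), (⊤ : B))) g = (a, g) := by
  have hg : a ⇨ g = g := by
    rw [himp_eq, sup_eq_left]
    calc aᶜ = aᶜ ⊓ (a ⊔ g) := by rw [h, inf_top_eq]
    _ ≤ g := by rw [inf_sup_left]; simp
  constructor
  · simp only [leftAct, rightAct, merge, top_inf_eq, Prod.mk.injEq, true_and]
    rw [himp_himp, himp_inf_distrib, himp_himp, inf_idem, ← himp_inf_distrib]
  · simp [leftAct, rightAct, merge, hg]
end

section
/- Let B be a Boolean algebra and let M(B) denote the set of contracts over B, regarded as a commutative monoid under conjunction (a, g) ∧ (a', g') = (a ∨ a', g ∧ g') with identity (⊥, ⊤), equipped with the left action x · (a, g) = (x ∧ a, x ⇨ g) and right action (a, g) · x = (a, a ⇨ (x ∧ g)) of B. Let N be any commutative monoid equipped with a left action and a right action of B satisfying the bimodule laws (unitality, associativity of each action over ∧ in B, commutation of the two actions, and distributivity of the two-sided action over the monoid operation of N), and let f : M(B) × M(B) → N be B-bilinear (additive in each argument with respect to conjunction, and satisfying x · f(m, n) · y = f(x · m · y, n) = f(m, x · n · y) for all x, y ∈ B). Then there exists a unique map f̂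 : M(B) → N that is B-linear (additive with respect to conjunction and satisfying x · f̂(m) · y = f̂(x · m · y)) such that f(C, C') = f̂(C • C') for all contracts C, C', where • denotes merging. In other words, (M(B), •) is the tensor product M(B) ⊗_B M(B). -/
/-- A contract over a Boolean algebra `B`: a pair `(a, g)` with `a ⊔ g = ⊤`. -/
def Contract (B : Type*) [BooleanAlgebra B] := {p : B × B // p.1 ⊔ p.2 = ⊤}

namespace Contract

variable {B : Type*} [BooleanAlgebra B]

/-- The conjunction of contracts `(a, g) ∧ (a', g') = (a ⊔ a', g ⊓ g')`. -/
def conj (c c' : Contract B) : Contract B :=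
  ⟨(c.1.1 ⊔ c'.1.1, c.1.2 ⊓ c'.1.2), by
    obtain ⟨⟨a, g⟩, h⟩ := c; obtain ⟨⟨a', g'⟩, h'⟩ := c'
    simp only at h h' ⊢
    rw [sup_inf_left,
      show a ⊔ a' ⊔ g = (a ⊔ g) ⊔ a' by ac_rfl, h,
      show a ⊔ a' ⊔ g' = (a' ⊔ g') ⊔ a by ac_rfl, h']
    simp⟩

/-- The merger of contracts `(a, g) • (a', g') = (a ⊓ a', (a ⊓ a') ⇨ (g ⊓ g'))`. -/
def merge (c c' : Contract B) : Contract B :=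
  ⟨(c.1.1 ⊓ c'.1.1, (c.1.1 ⊓ c'.1.1) ⇨ (c.1.2 ⊓ c'.1.2)), by
    rw [himp_eq, ← sup_assoc, sup_right_comm, sup_compl_eq_top, top_sup_eq]⟩

/-- The left action `x · (a, g) = (x ⊓ a, x ⇨ g)`. -/
def leftAct (x : B) (c : Contract B) : Contract B :=
  ⟨(x ⊓ c.1.1, x ⇨ c.1.2), by
    obtain ⟨⟨a, g⟩, h⟩ := c
    simp only at h ⊢
    rw [eq_top_iff, ← h]
    have h1 : a ≤ (x ⊓ a) ⊔ (x ⇨ g) := by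
      calc a = (x ⊔ xᶜ) ⊓ a := by simp
      _ = (x ⊓ a) ⊔ (xᶜ ⊓ a) := by rw [inf_sup_right]
      _ ≤ (x ⊓ a) ⊔ (x ⇨ g) := by gcongr; exact le_trans inf_le_left (by simp [himp_eq])
    have h2 : g ≤ (x ⊓ a) ⊔ (x ⇨ g) := by
      rw [himp_eq]; exact le_trans le_sup_left le_sup_right
    exact sup_le h1 h2⟩

/-- The right action `(a, g) · x = (a, a ⇨ (x ⊓ g))`. -/
def rightAct (c : Contract B) (x : B) : Contract B :=
  ⟨(c.1.1, c.1.1 ⇨ (x ⊓ c.1.2)), by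
    rw [himp_eq, ← sup_assoc, sup_right_comm, sup_compl_eq_top, top_sup_eq]⟩

/-- The identity contract `(⊤, ⊤)`. -/
def unit : Contract B := ⟨(⊤, ⊤), by simp⟩

lemma himp_eq_self {a g : B} (h : a ⊔ g = ⊤) : a ⇨ g = g := by
  rw [himp_eq, sup_eq_left]
  calc aᶜ = aᶜ ⊓ (a ⊔ g) := by rw [h, inf_top_eq]
    _ = aᶜ ⊓ g := by rw [inf_sup_left, compl_inf_self, bot_sup_eq]
    _ ≤ g := inf_le_right

lemma orbit_unit (x y : B) :
    (Contract.leftAct x (unit (B := B))).rightAct y = ⟨(x, x ⇨ y), by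
      rw [himp_eq, ← sup_assoc, sup_right_comm, sup_compl_eq_top, top_sup_eq]⟩ := by
  apply Subtype.ext
  simp [leftAct, rightAct, unit]

lemma self_eq_orbit (m : Contract B) :
    (Contract.leftAct m.1.1 (unit (B := B))).rightAct m.1.2 = m := by
  rw [orbit_unit]
  exact Subtype.ext (Prod.ext rfl (himp_eq_self m.2))

lemma merge_unit (m : Contract B) : m.merge unit = m := by
  apply Subtype.ext
  apply Prod.ext
  · simp [merge, unit]
  · simp only [merge, unit, inf_top_eq]
    exact himp_eq_self m.2

lemma merge_eq_act (C C' : Contract B) :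
    (Contract.leftAct C'.1.1 C).rightAct C'.1.2 = C.merge C' := by
  obtain ⟨⟨a, g⟩, h⟩ := C
  obtain ⟨⟨a', g'⟩, h'⟩ := C'
  apply Subtype.ext
  apply Prod.ext
  · simp [leftAct, rightAct, merge, inf_comm]
  · show (a' ⊓ a) ⇨ (g' ⊓ (a' ⇨ g)) = (a ⊓ a') ⇨ (g ⊓ g')
    calc (a' ⊓ a) ⇨ (g' ⊓ (a' ⇨ g))
        = ((a' ⊓ a) ⇨ g') ⊓ ((a' ⊓ a) ⇨ (a' ⇨ g)) := himp_inf_distrib _ _ _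
      _ = ((a' ⊓ a) ⇨ g') ⊓ ((a' ⊓ a ⊓ a') ⇨ g) := by rw [himp_himp]
      _ = ((a ⊓ a') ⇨ g') ⊓ ((a ⊓ a') ⇨ g) := by
          rw [show a' ⊓ a ⊓ a' = a ⊓ a' by ac_rfl, inf_comm a' a]
      _ = (a ⊓ a') ⇨ (g ⊓ g') := by rw [← himp_inf_distrib, inf_comm g' g]

end Contract

/-- `(M(B), •)` is the tensor product `M(B) ⊗_B M(B)` for the conjunctive structure:
for every `B`-bimodule `N` and every `B`-bilinear map
`f : M(B) × M(B) → N`, there is a unique `B`-linear map `f̂ : M(B) → N` with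
`f(C, C') = f̂(C • C')`, where `•` is the merging of contracts. -/
theorem merging_is_tensor_product {B : Type*} [BooleanAlgebra B]
    {N : Type*} [AddCommMonoid N]
    -- left and right actions of `B` on `N`
    (l : B → N → N) (r : N → B → N)
    -- bimodule laws for `N`
    (unit_l : ∀ n : N, l ⊤ n = n)
    (unit_r : ∀ n : N, r n ⊤ = n)
    (assoc_l : ∀ (x y : B) (n : N), l (x ⊓ y) n = l x (l y n))
    (assoc_r : ∀ (x y : B) (n : N), r n (x ⊓ y) = r (r n x) y)
    (comm_lr : ∀ (x y : B) (n : N), r (l x n) y = l x (r n y))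
    (distrib : ∀ (x y : B) (n n' : N), r (l x (n + n')) y = r (l x n) y + r (l x n') y)
    -- a `B`-bilinear map `f`
    (f : Contract B → Contract B → N)
    (f_add_left : ∀ m m' n : Contract B, f (m.conj m') n = f m n + f m' n)
    (f_add_right : ∀ m n n' : Contract B, f m (n.conj n') = f m n + f m n')
    (f_act_left : ∀ (x y : B) (m n : Contract B),
      r (l x (f m n)) y = f ((Contract.leftAct x m).rightAct y) n)
    (f_act_right : ∀ (x y : B) (m n : Contract B),
      r (l x (f m n)) y = f m ((Contract.leftAct x n).rightAct y)) :
    ∃! fhat : Contract B → N,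
      ((∀ m m' : Contract B, fhat (m.conj m') = fhat m + fhat m') ∧
        ∀ (x y : B) (m : Contract B),
          r (l x (fhat m)) y = fhat ((Contract.leftAct x m).rightAct y)) ∧
      ∀ C C' : Contract B, f C C' = fhat (C.merge C') := by
  refine ⟨fun m => f m Contract.unit, ⟨⟨fun m m' => f_add_left m m' _, fun x y m => f_act_left x y m _⟩, ?_⟩, ?_⟩
  · intro C C'
    calc f C C' = f C ((Contract.leftAct C'.1.1 Contract.unit).rightAct C'.1.2) := by
          rw [Contract.self_eq_orbit]
      _ = r (l C'.1.1 (f C Contract.unit)) C'.1.2 := (f_act_right _ _ _ _).symm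
      _ = f ((Contract.leftAct C'.1.1 C).rightAct C'.1.2) Contract.unit := f_act_left _ _ _ _
      _ = f (C.merge C') Contract.unit := by rw [Contract.merge_eq_act]
  · rintro g ⟨_, hfac⟩
    funext m
    rw [← Contract.merge_unit m, ← hfac m Contract.unit, Contract.merge_unit]
end

section
/- Let B be a Boolean algebra, let x ∈ B, and let (a, g) be a contract over B. Define the disjunctive left action x ⋆ (a, g) = (x ⇨ a, x ∧ g) and the disjunctive right action (a, g) ⋆ x = (g ⇨ (x ∧ a), g). Then the reciprocal map (a, g)⁻¹ = (g, a) intertwines these with the conjunctive actions: (x ⋆ (a, g))⁻¹ = x · (a, g)⁻¹ and ((a, g) ⋆ x)⁻¹ = (a, g)⁻¹ · x, where x · (a', g') = (x ∧ a', x ⇨ g') and (a', g') · x = (a', a' ⇨ (x ∧ g')). Moreover, both x ⋆ (a, g) and (a, g) ⋆ x are contracts over B. -/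
/-- The disjunctive left action `x ⋆ (a, g) = (x ⇨ a, x ⊓ g)`. -/
def dLeftAct {B : Type*} [BooleanAlgebra B] (x : B) (c : B × B) : B × B :=
  (x ⇨ c.1, x ⊓ c.2)

/-- The disjunctive right action `(a, g) ⋆ x = (g ⇨ (x ⊓ a), g)`. -/
def dRightAct {B : Type*} [BooleanAlgebra B] (c : B × B) (x : B) : B × B :=
  (c.2 ⇨ (x ⊓ c.1), c.2)

/-- The reciprocal of a contract `(a, g)⁻¹ = (g, a)`. -/
def recip {B : Type*} [BooleanAlgebra B] (c : B × B) : B × B :=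
  (c.2, c.1)

/-- The reciprocal intertwines the disjunctive actions with the conjunctive actions, and
the disjunctive actions send contracts to contracts. -/
theorem recip_intertwines_actions {B : Type*} [BooleanAlgebra B] (x a g : B)
    (h : a ⊔ g = ⊤) :
    recip (dLeftAct x (a, g)) = leftAct x (recip (a, g)) ∧
    recip (dRightAct (a, g) x) = rightAct (recip (a, g)) x ∧
    (x ⇨ a) ⊔ (x ⊓ g) = ⊤ ∧
    (g ⇨ (x ⊓ a)) ⊔ g = ⊤ := by
  refine ⟨rfl, rfl, ?_, ?_⟩
  · calc (x ⇨ a) ⊔ (x ⊓ g) = (x ⇨ a ⊔ g) ⊓ ((x ⇨ a) ⊔ x) := by rw [sup_inf_left]; rw [inf_comm]; congr 1; simp [himp_eq, sup_assoc, sup_left_comm, sup_comm]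
      _ = ⊤ := by simp [h, himp_eq, sup_assoc]
  · calc (g ⇨ (x ⊓ a)) ⊔ g = ⊤ := by simp [himp_eq, sup_comm, ← sup_assoc]
end

section
/- Let B be a Boolean algebra and let M(B) denote the set of contracts over B, regarded as a commutative monoid under disjunction (a, g) ∨ (a', g') = (a ∧ a', g ∨ g') with identity (⊤, ⊥), equipped with the disjunctive left action x ⋆ (a, g) = (x ⇨ a, x ∧ g) and disjunctive right action (a, g) ⋆ x = (g ⇨ (x ∧ a), g) of B. Let N be any commutative monoid equipped with a left action and a right action of B satisfying the bimodule laws (unitality, associativity of each action over ∧ in B, commutation of the two actions, and distributivity of the two-sided action over the monoid operation of N), and let f : M(B) × M(B) → N be B-bilinear (additive in each argument with respect to disjunction, and satisfying x · f(m, n) · y = f(x ⋆ m ⋆ y, n) = f(m, x ⋆ n ⋆ y) for all x, y ∈ B). Then there exists a unique map f̆ : M(B) → N that is B-linear (additive with respect to disjunction and satisfying x · f̆(m) · y = f̆(x ⋆ m ⋆ y)) such that f(C, C') = f̆(C ∥ C') for all contracts C, C', where ∥ denotes composition. In other words, (M(B), ∥) is the tensor product M(B) ⊗_B M(B) for the disjunctive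 structure. -/
namespace Contract

variable {B : Type*} [BooleanAlgebra B]

/-- The disjunction of contracts `(a, g) ∨ (a', g') = (a ⊓ a', g ⊔ g')`. -/
def disj (c c' : Contract B) : Contract B :=
  ⟨(c.1.1 ⊓ c'.1.1, c.1.2 ⊔ c'.1.2), by
    obtain ⟨⟨a, g⟩, h⟩ := c; obtain ⟨⟨a', g'⟩, h'⟩ := c'
    simp only at h h' ⊢
    rw [sup_inf_right,
      show a ⊔ (g ⊔ g') = (a ⊔ g) ⊔ g' by ac_rfl, h,
      show a' ⊔ (g ⊔ g') = (a' ⊔ g') ⊔ g by ac_rfl, h']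
    simp⟩

/-- The composition of contracts `(a, g) ∥ (a', g') = ((g ⊓ g') ⇨ (a ⊓ a'), g ⊓ g')`. -/
def comp (c c' : Contract B) : Contract B :=
  ⟨((c.1.2 ⊓ c'.1.2) ⇨ (c.1.1 ⊓ c'.1.1), c.1.2 ⊓ c'.1.2), by
    rw [himp_eq, sup_assoc, compl_sup_eq_top, sup_top_eq]⟩

/-- The disjunctive left action `x ⋆ (a, g) = (x ⇨ a, x ⊓ g)`. -/
def dLeftAct (x : B) (c : Contract B) : Contract B :=
  ⟨(x ⇨ c.1.1, x ⊓ c.1.2), by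
    obtain ⟨⟨a, g⟩, h⟩ := c
    simp only at h ⊢
    rw [eq_top_iff, ← h]
    have h2 : g ≤ (x ⇨ a) ⊔ (x ⊓ g) := by
      calc g = (x ⊔ xᶜ) ⊓ g := by simp
      _ = (x ⊓ g) ⊔ (xᶜ ⊓ g) := by rw [inf_sup_right]
      _ ≤ (x ⊓ g) ⊔ (x ⇨ a) := by gcongr; exact le_trans inf_le_left (by simp [himp_eq])
      _ = (x ⇨ a) ⊔ (x ⊓ g) := sup_comm _ _
    have h1 : a ≤ (x ⇨ a) ⊔ (x ⊓ g) := by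
      rw [himp_eq]; exact le_trans le_sup_left le_sup_left
    exact sup_le h1 h2⟩

/-- The disjunctive right action `(a, g) ⋆ x = (g ⇨ (x ⊓ a), g)`. -/
def dRightAct (c : Contract B) (x : B) : Contract B :=
  ⟨(c.1.2 ⇨ (x ⊓ c.1.1), c.1.2), by
    rw [himp_eq, sup_assoc, compl_sup_eq_top, sup_top_eq]⟩

/-- The identity contract for composition: `(⊤, ⊤)`. -/
def eTop : Contract B := ⟨(⊤, ⊤), by simp⟩

lemma compl_le (c : Contract B) : c.1.2ᶜ ≤ c.1.1 := by
  calc c.1.2ᶜ = c.1.2ᶜ ⊓ (c.1.1 ⊔ c.1.2) := by rw [c.2, inf_top_eq]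
  _ = c.1.2ᶜ ⊓ c.1.1 ⊔ c.1.2ᶜ ⊓ c.1.2 := inf_sup_left _ _ _
  _ ≤ c.1.1 := by simp

lemma himp_self_eq (c : Contract B) : c.1.2 ⇨ c.1.1 = c.1.1 := by
  rw [himp_eq, sup_eq_left]; exact compl_le c

/-- Every contract `(a, g)` equals `g ⋆ (⊤,⊤) ⋆ a`. -/
lemma rep (c : Contract B) : (dLeftAct c.1.2 eTop).dRightAct c.1.1 = c := by
  apply Subtype.ext
  apply Prod.ext
  · show (c.1.2 ⊓ ⊤) ⇨ (c.1.1 ⊓ (c.1.2 ⇨ ⊤)) = c.1.1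
    simp [himp_self_eq c]
  · show c.1.2 ⊓ ⊤ = c.1.2
    simp

/-- `g ⋆ C' ⋆ a = C ∥ C'` where `C = (a, g)`. -/
lemma act_eq_comp (c c' : Contract B) :
    (dLeftAct c.1.2 c').dRightAct c.1.1 = c.comp c' := by
  apply Subtype.ext
  apply Prod.ext
  · show (c.1.2 ⊓ c'.1.2) ⇨ (c.1.1 ⊓ (c.1.2 ⇨ c'.1.1))
        = (c.1.2 ⊓ c'.1.2) ⇨ (c.1.1 ⊓ c'.1.1)
    rw [himp_inf_distrib, himp_inf_distrib, ← himp_himp,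
      himp_himp (c.1.2 ⊓ c'.1.2)]
    congr 2
    rw [inf_right_comm, inf_idem]
  · rfl

lemma comp_eTop (c : Contract B) : c.comp eTop = c := by
  apply Subtype.ext
  apply Prod.ext
  · show (c.1.2 ⊓ ⊤) ⇨ (c.1.1 ⊓ ⊤) = c.1.1
    simp [himp_self_eq c]
  · show c.1.2 ⊓ ⊤ = c.1.2
    simp

end Contract

/-- `(M(B), ∥)` is the tensor product `M(B) ⊗_B M(B)` for the disjunctive structure:
for every `B`-bimodule `N` and every `B`-bilinear map
`f : M(B) × M(B) → N` (with respect to the disjunctive monoid structure and the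
disjunctive actions `⋆`), there is a unique `B`-linear map `f̆ : M(B) → N` with
`f(C, C') = f̆(C ∥ C')`, where `∥` is the composition of contracts. -/
theorem composition_is_tensor_product {B : Type*} [BooleanAlgebra B]
    {N : Type*} [AddCommMonoid N]
    -- left and right actions of `B` on `N`
    (l : B → N → N) (r : N → B → N)
    -- bimodule laws for `N`
    (unit_l : ∀ n : N, l ⊤ n = n)
    (unit_r : ∀ n : N, r n ⊤ = n)
    (assoc_l : ∀ (x y : B) (n : N), l (x ⊓ y) n = l x (l y n))
    (assoc_r : ∀ (x y : B) (n : N), r n (x ⊓ y) = r (r n x) y)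
    (comm_lr : ∀ (x y : B) (n : N), r (l x n) y = l x (r n y))
    (distrib : ∀ (x y : B) (n n' : N), r (l x (n + n')) y = r (l x n) y + r (l x n') y)
    -- a `B`-bilinear map `f` for the disjunctive structure
    (f : Contract B → Contract B → N)
    (f_add_left : ∀ m m' n : Contract B, f (m.disj m') n = f m n + f m' n)
    (f_add_right : ∀ m n n' : Contract B, f m (n.disj n') = f m n + f m n')
    (f_act_left : ∀ (x y : B) (m n : Contract B),
      r (l x (f m n)) y = f ((Contract.dLeftAct x m).dRightAct y) n)
    (f_act_right : ∀ (x y : B) (m n : Contract B),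
      r (l x (f m n)) y = f m ((Contract.dLeftAct x n).dRightAct y)) :
    ∃! fbreve : Contract B → N,
      ((∀ m m' : Contract B, fbreve (m.disj m') = fbreve m + fbreve m') ∧
        ∀ (x y : B) (m : Contract B),
          r (l x (fbreve m)) y = fbreve ((Contract.dLeftAct x m).dRightAct y)) ∧
      ∀ C C' : Contract B, f C C' = fbreve (C.comp C') := by
  -- The key computation: `f C C' = f (C ∥ C') e` where `e = (⊤,⊤)`.
  have key : ∀ C C' : Contract B, f C C' = f (C.comp C') Contract.eTop := by
    intro C C'
    have h1 : f C C' = f Contract.eTop (C.comp C') := by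
      conv_lhs => rw [← Contract.rep C]
      rw [← f_act_left, f_act_right, Contract.act_eq_comp]
    have h2 : f (C.comp C') Contract.eTop = f Contract.eTop (C.comp C') := by
      conv_lhs => rw [← Contract.rep (C.comp C')]
      rw [← f_act_left, f_act_right, Contract.rep (C.comp C')]
    rw [h1, h2]
  refine ⟨fun C => f C Contract.eTop, ⟨⟨fun m m' => f_add_left m m' _,
    fun x y m => f_act_left x y m _⟩, fun C C' => key C C'⟩, ?_⟩
  intro g ⟨_, hg⟩
  funext C
  have := hg C Contract.eTop
  rw [Contract.comp_eTop] at this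
  exact this.symm
end
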